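/- arXiv:2506.11707 — 2 statements merged into one kernel-verified Lean document; each statement's English description precedes it below -/
import Mathlib

section
/- Let B be a bounded self-adjoint operator and Π an orthogonal projection on a separable Hilbert space with ‖ΠB(1−Π)‖_tr ≤ C. Define U_t(B) = e^{it ΠBΠ} − Π e^{itB} Π. Then for every t ≥ 0, ‖Π U_t(B)‖_tr ≤ C t. -/
open scoped InnerProductSpace ENNReal

/-!
With `x = i PBP` and `y = i B`, Duhamel's formula gives
`P e^{ty} - e^{tx} P = ∫₀ᵗ e^{(t-s)x} (P y - x P) e^{sy} ds`, where `P y - x P = i PB(1-P)`.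
Since `P` commutes with `e^{tx}`, `P U_t(B) = -(P e^{ty} - e^{tx} P) P`. The integrand is the block
`PB(1-P)` between two unitaries, so its trace norm is at most `C`, and integrating gives `C t`;
right multiplication by `P` does not increase the trace norm.
-/

/-- The trace norm (Schatten-1 norm) of an operator, defined through its classical
variational characterization: `‖T‖₁ = sup ∑ᵢ |⟪eᵢ, T fᵢ⟫|` over finite orthonormal
families `(eᵢ)`, `(fᵢ)`.  It takes the value `∞` iff `T` is not trace class. -/
noncomputable def traceNorm {H : Type*} [NormedAddCommGroup H] [InnerProductSpace ℂ H]
    (T : H →L[ℂ] H) : ℝ≥0∞ :=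
  ⨆ (n : ℕ) (e : Fin n → H) (f : Fin n → H) (_ : Orthonormal ℂ e) (_ : Orthonormal ℂ f),
    ENNReal.ofReal (∑ i, ‖⟪e i, T (f i)⟫_ℂ‖)

section TraceNorm

variable {H : Type*} [NormedAddCommGroup H] [InnerProductSpace ℂ H]

theorem traceNorm_le_iff {T : H →L[ℂ] H} {c : ℝ≥0∞} :
    traceNorm T ≤ c ↔ ∀ (n : ℕ) (e f : Fin n → H), Orthonormal ℂ e → Orthonormal ℂ f →
      ENNReal.ofReal (∑ i, ‖⟪e i, T (f i)⟫_ℂ‖) ≤ c := by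
  simp only [traceNorm, iSup_le_iff]

theorem ofReal_sum_norm_inner_le_traceNorm (T : H →L[ℂ] H) {n : ℕ} {e f : Fin n → H}
    (he : Orthonormal ℂ e) (hf : Orthonormal ℂ f) :
    ENNReal.ofReal (∑ i, ‖⟪e i, T (f i)⟫_ℂ‖) ≤ traceNorm T :=
  traceNorm_le_iff.mp le_rfl n e f he hf

theorem sum_norm_inner_le_of_traceNorm_le {T : H →L[ℂ] H} {C : ℝ} (hC : 0 ≤ C)
    (h : traceNorm T ≤ ENNReal.ofReal C) {n : ℕ} {e f : Fin n → H}
    (he : Orthonormal ℂ e) (hf : Orthonormal ℂ f) :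
    ∑ i, ‖⟪e i, T (f i)⟫_ℂ‖ ≤ C :=
  (ENNReal.ofReal_le_ofReal_iff hC).mp ((ofReal_sum_norm_inner_le_traceNorm T he hf).trans h)

@[simp]
theorem traceNorm_neg (T : H →L[ℂ] H) : traceNorm (-T) = traceNorm T := by
  simp [traceNorm]

theorem traceNorm_add_le (S T : H →L[ℂ] H) : traceNorm (S + T) ≤ traceNorm S + traceNorm T := by
  refine traceNorm_le_iff.mpr fun n e f he hf => ?_
  calc ENNReal.ofReal (∑ i, ‖⟪e i, (S + T) (f i)⟫_ℂ‖)
      ≤ ENNReal.ofReal (∑ i, ‖⟪e i, S (f i)⟫_ℂ‖ + ∑ i, ‖⟪e i, T (f i)⟫_ℂ‖) := by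
        gcongr
        rw [← Finset.sum_add_distrib]
        gcongr with i
        simpa [inner_add_right] using norm_add_le _ _
    _ = ENNReal.ofReal (∑ i, ‖⟪e i, S (f i)⟫_ℂ‖) + ENNReal.ofReal (∑ i, ‖⟪e i, T (f i)⟫_ℂ‖) :=
        ENNReal.ofReal_add (by positivity) (by positivity)
    _ ≤ traceNorm S + traceNorm T := by
        gcongr <;> exact ofReal_sum_norm_inner_le_traceNorm _ he hf

theorem traceNorm_smul_le (c : ℂ) (T : H →L[ℂ] H) : traceNorm (c • T) ≤ ‖c‖ₑ * traceNorm T := by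
  refine traceNorm_le_iff.mpr fun n e f he hf => ?_
  calc ENNReal.ofReal (∑ i, ‖⟪e i, (c • T) (f i)⟫_ℂ‖)
      = ‖c‖ₑ * ENNReal.ofReal (∑ i, ‖⟪e i, T (f i)⟫_ℂ‖) := by
        simp only [smul_apply, inner_smul_right, norm_mul, ← Finset.mul_sum,
          ENNReal.ofReal_mul (norm_nonneg c), ofReal_norm]
    _ ≤ ‖c‖ₑ * traceNorm T := by gcongr; exact ofReal_sum_norm_inner_le_traceNorm _ he hf

variable [CompleteSpace H]

theorem Orthonormal.map_of_star_mul_self {U : H →L[ℂ] H} (hU : star U * U = 1) {ι : Type*}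
    {e : ι → H} (he : Orthonormal ℂ e) : Orthonormal ℂ (fun i => U (e i)) := by
  classical
  rw [orthonormal_iff_ite] at he ⊢
  intro i j
  rw [U.inner_map_map_iff_adjoint_comp_self.mpr hU]
  exact he i j

theorem traceNorm_mul_le_of_star_mul_self {U : H →L[ℂ] H} (hU : star U * U = 1)
    (T : H →L[ℂ] H) : traceNorm (T * U) ≤ traceNorm T :=
  traceNorm_le_iff.mpr fun _ _ _ he hf =>
    ofReal_sum_norm_inner_le_traceNorm T he (hf.map_of_star_mul_self hU)

theorem traceNorm_mul_le_of_mul_star_self {U : H →L[ℂ] H} (hU : U * star U = 1)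
    (T : H →L[ℂ] H) : traceNorm (U * T) ≤ traceNorm T := by
  refine traceNorm_le_iff.mpr fun n e f he hf => ?_
  have hU' : star (star U) * star U = 1 := by rwa [star_star]
  simpa [← ContinuousLinearMap.adjoint_inner_left, ← ContinuousLinearMap.star_eq_adjoint] using
    ofReal_sum_norm_inner_le_traceNorm T (he.map_of_star_mul_self hU') hf

/-- Right multiplication by an orthogonal projection `P` does not increase the trace norm, since
`P` is the average of `1` and the unitary reflection `2P - 1`. -/
theorem traceNorm_mul_proj_le {P : H →L[ℂ] H} (hP : IsIdempotentElem P)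
    (hPsa : IsSelfAdjoint P) (T : H →L[ℂ] H) : traceNorm (T * P) ≤ traceNorm T := by
  set R : H →L[ℂ] H := (2 : ℂ) • P - 1
  have hR : star R * R = 1 := by
    have : star R = R := by simp [R, star_smul, hPsa.star_eq]
    rw [this]
    simp only [R, sub_mul, mul_sub, smul_mul_assoc, mul_smul_comm, hP.eq, mul_one, one_mul]
    module
  have hTP : T * P = (2⁻¹ : ℂ) • (T + T * R) := by
    simp only [R, mul_sub, mul_smul_comm, mul_one]
    module
  have h2 : ‖(2⁻¹ : ℂ)‖ₑ = 2⁻¹ := by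
    rw [enorm_inv two_ne_zero, ← ofReal_norm, Complex.norm_two, ENNReal.ofReal_ofNat]
  calc traceNorm (T * P) ≤ ‖(2⁻¹ : ℂ)‖ₑ * (traceNorm T + traceNorm (T * R)) := by
        rw [hTP]
        exact (traceNorm_smul_le _ _).trans (by gcongr; exact traceNorm_add_le _ _)
    _ ≤ 2⁻¹ * (traceNorm T + traceNorm T) := by
        rw [h2]
        gcongr
        exact traceNorm_mul_le_of_star_mul_self hR T
    _ = traceNorm T := by
        rw [← two_mul, ← mul_assoc, ENNReal.inv_mul_cancel two_ne_zero ENNReal.ofNat_ne_top,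
          one_mul]

theorem traceNorm_intervalIntegral_le {G : ℝ → H →L[ℂ] H} {a b C : ℝ} (hab : a ≤ b)
    (hC : 0 ≤ C)
    (hG : IntervalIntegrable G MeasureTheory.volume a b)
    (hGC : ∀ s ∈ Set.Ioo a b, traceNorm (G s) ≤ ENNReal.ofReal C) :
    traceNorm (∫ s in a..b, G s) ≤ ENNReal.ofReal (C * (b - a)) := by
  refine traceNorm_le_iff.mpr fun n e f he hf => ENNReal.ofReal_le_ofReal ?_
  let L : Fin n → (H →L[ℂ] H) →L[ℂ] ℂ := fun i =>
    (innerSL ℂ (e i)).comp (ContinuousLinearMap.apply ℂ H (f i))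
  have hL : ∀ i T, L i T = ⟪e i, T (f i)⟫_ℂ := fun _ _ => rfl
  have hLG : ∀ i, IntervalIntegrable (fun s => L i (G s)) MeasureTheory.volume a b :=
    fun i => ⟨(L i).integrable_comp hG.1, (L i).integrable_comp hG.2⟩
  calc ∑ i, ‖L i (∫ s in a..b, G s)‖
      = ∑ i, ‖∫ s in a..b, L i (G s)‖ := by
        simp only [(L _).intervalIntegral_comp_comm hG]
    _ ≤ ∑ i, ∫ s in a..b, ‖L i (G s)‖ := by
        gcongr with i
        exact intervalIntegral.norm_integral_le_integral_norm hab
    _ = ∫ s in a..b, ∑ i, ‖L i (G s)‖ :=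
        (intervalIntegral.integral_finsetSum fun i _ => (hLG i).norm).symm
    _ ≤ ∫ _ in a..b, C := by
        refine intervalIntegral.integral_mono_on_of_le_Ioo hab
          (by simpa only [Finset.sum_fn] using
            IntervalIntegrable.sum _ fun i _ => (hLG i).norm) intervalIntegrable_const
          fun s hs => ?_
        simpa only [hL] using sum_norm_inner_le_of_traceNorm_le hC (hGC s hs) he hf
    _ = C * (b - a) := by simp [mul_comm]

end TraceNorm

open NormedSpace

section Duhamel

variable {𝔸 : Type*} [NormedRing 𝔸] [NormedAlgebra ℝ 𝔸] [CompleteSpace 𝔸]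

theorem continuous_exp_smul_mul_mul_exp_smul (x y a : 𝔸) (t : ℝ) :
    Continuous fun s : ℝ => exp ((t - s) • x) * a * exp (s • y) :=
  (((differentiable_exp_smul_const ℝ x).continuous.comp (continuous_const.sub continuous_id)).mul
    continuous_const).mul (differentiable_exp_smul_const ℝ y).continuous

theorem mul_exp_smul_sub_exp_smul_mul_eq_integral (x y p : 𝔸) (t : ℝ) :
    p * exp (t • y) - exp (t • x) * p =
      ∫ s in (0 : ℝ)..t, exp ((t - s) • x) * (p * y - x * p) * exp (s • y) := by
  set F : ℝ → 𝔸 := fun s => exp ((t - s) • x) * p * exp (s • y)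
  have hF : ∀ s, HasDerivAt F (exp ((t - s) • x) * (p * y - x * p) * exp (s • y)) s := by
    intro s
    have hX : HasDerivAt (fun r : ℝ => exp ((t - r) • x)) (-(x * exp ((t - s) • x))) s := by
      simpa [Function.comp_def] using
        (hasDerivAt_exp_smul_const' (𝕂 := ℝ) x (t - s)).scomp s ((hasDerivAt_id s).const_sub t)
    have hY : HasDerivAt (fun r : ℝ => exp (r • y)) (y * exp (s • y)) s :=
      hasDerivAt_exp_smul_const' y s
    refine ((hX.mul_const p).mul hY).congr_deriv ?_
    rw [((Commute.refl x).smul_right (t - s)).exp_right.eq]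
    noncomm_ring
  rw [intervalIntegral.integral_eq_sub_of_hasDerivAt (fun s _ => hF s)
    ((continuous_exp_smul_mul_mul_exp_smul x y _ t).intervalIntegrable _ _)]
  simp [F]

end Duhamel

section Unitary

variable {A : Type*} [NormedRing A] [NormedAlgebra ℂ A] [StarRing A] [ContinuousStar A]
  [CompleteSpace A] [StarModule ℂ A]

theorem exp_smul_I_smul_mem_unitary {a : A} (ha : IsSelfAdjoint a) (s : ℝ) :
    exp (s • (Complex.I • a)) ∈ unitary A := by
  rw [← Complex.coe_smul, smul_comm]
  exact (selfAdjoint.expUnitary ⟨(s : ℂ) • a, IsSelfAdjoint.smul (Complex.conj_ofReal s) ha⟩).prop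

end Unitary

theorem traceNorm_proj_U_le_general {H : Type*} [NormedAddCommGroup H] [InnerProductSpace ℂ H]
    [CompleteSpace H]
    (B P : H →L[ℂ] H) (hB : IsSelfAdjoint B)
    (hP : IsIdempotentElem P) (hPsa : IsSelfAdjoint P)
    (C : ℝ) (hC : 0 ≤ C)
    (hblock : traceNorm (P * B * (1 - P)) ≤ ENNReal.ofReal C)
    (t : ℝ) (ht : 0 ≤ t) :
    traceNorm (P * (NormedSpace.exp ((t : ℂ) • (Complex.I • (P * B * P)))
        - P * NormedSpace.exp ((t : ℂ) • (Complex.I • B)) * P))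
      ≤ ENNReal.ofReal (C * t) := by
  have hPBP : IsSelfAdjoint (P * B * P) := by simpa [hPsa.star_eq] using hB.conjugate P
  set x := Complex.I • (P * B * P)
  set y := Complex.I • B
  have hPx : Commute P (exp (t • x)) := by
    refine ((Commute.smul_right ?_ _).smul_right _).exp_right
    simp only [Commute, SemiconjBy, ← mul_assoc, hP.eq]
    simp only [mul_assoc, hP.eq]
  have hgen : P * y - x * P = Complex.I • (P * B * (1 - P)) := by
    simp only [x, y, mul_smul_comm, smul_mul_assoc, mul_assoc, hP.eq, mul_sub, mul_one, smul_sub]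
  have hsplit : P * (exp (t • x) - P * exp (t • y) * P) =
      -((P * exp (t • y) - exp (t • x) * P) * P) := by
    rw [mul_sub, hPx.eq, ← mul_assoc, ← mul_assoc P P, hP.eq, sub_mul, mul_assoc _ P P, hP.eq,
      neg_sub]
  have hbound : ∀ s, traceNorm (exp ((t - s) • x) * (Complex.I • (P * B * (1 - P))) *
      exp (s • y)) ≤ ENNReal.ofReal C := fun s =>
    calc _ ≤ traceNorm (exp ((t - s) • x) * (Complex.I • (P * B * (1 - P)))) :=
          traceNorm_mul_le_of_star_mul_self
            (Unitary.star_mul_self_of_mem (exp_smul_I_smul_mem_unitary hB s)) _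
      _ ≤ traceNorm (Complex.I • (P * B * (1 - P))) :=
          traceNorm_mul_le_of_mul_star_self
            (Unitary.mul_star_self_of_mem (exp_smul_I_smul_mem_unitary hPBP _)) _
      _ ≤ ‖Complex.I‖ₑ * traceNorm (P * B * (1 - P)) := traceNorm_smul_le _ _
      _ ≤ ENNReal.ofReal C := by
          rwa [← ofReal_norm, Complex.norm_I, ENNReal.ofReal_one, one_mul]
  rw [Complex.coe_smul, Complex.coe_smul, hsplit, traceNorm_neg]
  calc _ ≤ traceNorm (P * exp (t • y) - exp (t • x) * P) := traceNorm_mul_proj_le hP hPsa _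
    _ = traceNorm (∫ s in (0 : ℝ)..t,
          exp ((t - s) • x) * (Complex.I • (P * B * (1 - P))) * exp (s • y)) := by
        rw [mul_exp_smul_sub_exp_smul_mul_eq_integral, hgen]
    _ ≤ ENNReal.ofReal (C * (t - 0)) :=
        traceNorm_intervalIntegral_le ht hC
          ((continuous_exp_smul_mul_mul_exp_smul _ _ _ t).intervalIntegrable _ _)
          fun s _ => hbound s
    _ = ENNReal.ofReal (C * t) := by rw [sub_zero]

/-- Let `B` be bounded self-adjoint and `P` an orthogonal projection with
`‖P B (1−P)‖_tr ≤ C`.  With `U_t(B) = e^{it P B P} − P e^{itB} P`, one has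
`‖P U_t(B)‖_tr ≤ C t` for every `t ≥ 0`. -/
theorem traceNorm_proj_U_le {H : Type*} [NormedAddCommGroup H] [InnerProductSpace ℂ H]
    [CompleteSpace H] [TopologicalSpace.SeparableSpace H]
    (B P : H →L[ℂ] H) (hB : IsSelfAdjoint B)
    (hP : IsIdempotentElem P) (hPsa : IsSelfAdjoint P)
    (C : ℝ) (hC : 0 ≤ C)
    (hblock : traceNorm (P * B * (1 - P)) ≤ ENNReal.ofReal C)
    (t : ℝ) (ht : 0 ≤ t) :
    traceNorm (P * (NormedSpace.exp ((t : ℂ) • (Complex.I • (P * B * P)))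
        - P * NormedSpace.exp ((t : ℂ) • (Complex.I • B)) * P))
      ≤ ENNReal.ofReal (C * t) :=
  traceNorm_proj_U_le_general B P hB hP hPsa C hC hblock t ht
end

section
/- Let ρ : ℂ → ℝ be 1-Lipschitz, α ≥ 0, ε = N^{-1/2}, and P_N the Bargmann projection with kernel N e^{N(x z̄ − |x|²/2 − |z|²/2)}. Then the conjugated operator P_N^α := e^{αρ/ε} P_N e^{-αρ/ε} has kernel bounded by |P_N^α(x,z)| ≤ e^{α²} N e^{-N|x−z|²/4}, and ‖P_N^α − P_N‖ ≤ C α e^{α²} for a universal constant C. -/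
open MeasureTheory
open scoped ComplexConjugate ENNReal

/-- The measure `γ` on `ℂ` with `dγ(z) = π⁻¹ d²z`. -/
noncomputable def gammaMeasure : Measure ℂ := ENNReal.ofReal (1 / Real.pi) • (volume : Measure ℂ)

/-- The Bargmann kernel `P_N(x,z) = N e^{N(x z̄ − |x|²/2 − |z|²/2)}`. -/
noncomputable def bargmannKernel (N : ℝ) (x z : ℂ) : ℂ :=
  (N : ℂ) * Complex.exp ((N : ℂ) * (x * conj z - (‖x‖ : ℂ) ^ 2 / 2 - (‖z‖ : ℂ) ^ 2 / 2))

/-!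
With `v = √N ‖x - z‖`, the Bargmann kernel has modulus `N e^{-v²/2}` and, `ρ` being 1-Lipschitz,
the conjugating exponent is at most `α v` in absolute value. Completing the square,
`α v - v²/2 ≤ α² - v²/4`, gives the kernel bound. For `P_N^α - P_N`, the estimates
`|e^t - 1| ≤ |t| e^{|t|}` and `v e^{-v²/8} ≤ 2` dominate the kernel by
`α e^{α²} · 2N e^{-N‖x - z‖²/8}`, whose `γ`-integral in either variable is `16 α e^{α²}`;
Schur's test then bounds the operator on `L²(γ)` by that number.
-/

theorem ENNReal.lintegral_mul_sq_le {X : Type*} [MeasurableSpace X] {μ : Measure X}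
    {k f : X → ℝ≥0∞} (hk : AEMeasurable k μ) (hf : AEMeasurable f μ) :
    (∫⁻ x, k x * f x ∂μ) ^ 2 ≤ (∫⁻ x, k x ∂μ) * ∫⁻ x, k x * f x ^ 2 ∂μ := by
  have hsqrt : ∀ a : ℝ≥0∞, a ^ (2⁻¹ : ℝ) * a ^ (2⁻¹ : ℝ) = a := fun a => by
    rw [← ENNReal.rpow_add_of_nonneg _ _ (by norm_num) (by norm_num)]; norm_num
  have holder := ENNReal.lintegral_mul_norm_pow_le hk (hk.mul (hf.pow_const 2))
    (p := 2⁻¹) (q := 2⁻¹) (by norm_num) (by norm_num) (by norm_num)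
  calc (∫⁻ x, k x * f x ∂μ) ^ 2
      = (∫⁻ x, k x ^ (2⁻¹ : ℝ) * (k x * f x ^ 2) ^ (2⁻¹ : ℝ) ∂μ) ^ 2 := by
        congr 2 with x
        rw [ENNReal.mul_rpow_of_nonneg _ _ (by norm_num), ← mul_assoc, hsqrt]
        rw [show (2⁻¹ : ℝ) = ((2 : ℕ) : ℝ)⁻¹ by norm_num, ENNReal.pow_rpow_inv_natCast two_ne_zero]
    _ ≤ ((∫⁻ x, k x ∂μ) ^ (2⁻¹ : ℝ) * (∫⁻ x, k x * f x ^ 2 ∂μ) ^ (2⁻¹ : ℝ)) ^ 2 := by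
        gcongr; exact holder
    _ = (∫⁻ x, k x ∂μ) * ∫⁻ x, k x * f x ^ 2 ∂μ := by
        rw [mul_pow, sq, sq, hsqrt, hsqrt]

theorem sq_eLpNorm_two {X E : Type*} [MeasurableSpace X] {μ : Measure X} [NormedAddCommGroup E]
    (f : X → E) :
    eLpNorm f 2 μ ^ 2 = ∫⁻ x, ‖f x‖ₑ ^ 2 ∂μ := by
  simpa using eLpNorm_nnreal_pow_eq_lintegral (f := f) (μ := μ) (p := 2) two_ne_zero

theorem enorm_mul_le {E : Type*} [NormedRing E] (a b : E) : ‖a * b‖ₑ ≤ ‖a‖ₑ * ‖b‖ₑ := by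
  simpa [enorm, ← ENNReal.coe_mul] using nnnorm_mul_le a b

theorem eLpNorm_two_integral_kernel_mul_le {X E : Type*} [MeasurableSpace X] {μ : Measure X}
    [SFinite μ] [NormedRing E] [NormedSpace ℝ E] {K : X → X → E} {k : X → X → ℝ≥0∞}
    (hk : Measurable (Function.uncurry k)) (hK : ∀ x z, ‖K x z‖ₑ ≤ k x z) {A : ℝ≥0∞}
    (hrow : ∀ x, ∫⁻ z, k x z ∂μ ≤ A) (hcol : ∀ z, ∫⁻ x, k x z ∂μ ≤ A)
    {u : X → E} (hu : AEStronglyMeasurable u μ) :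
    eLpNorm (fun x => ∫ z, K x z * u z ∂μ) 2 μ ≤ A * eLpNorm u 2 μ := by
  have hku : AEMeasurable (Function.uncurry fun x z => k x z * ‖u z‖ₑ ^ 2) (μ.prod μ) :=
    hk.aemeasurable.mul (hu.enorm.pow_const 2).comp_snd
  have hpoint (x : X) : ‖∫ z, K x z * u z ∂μ‖ₑ ^ 2 ≤ A * ∫⁻ z, k x z * ‖u z‖ₑ ^ 2 ∂μ :=
    calc ‖∫ z, K x z * u z ∂μ‖ₑ ^ 2 ≤ (∫⁻ z, k x z * ‖u z‖ₑ ∂μ) ^ 2 := by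
          gcongr
          refine (enorm_integral_le_lintegral_enorm _).trans (lintegral_mono fun z => ?_)
          exact (enorm_mul_le _ _).trans (by gcongr; exact hK x z)
      _ ≤ (∫⁻ z, k x z ∂μ) * ∫⁻ z, k x z * ‖u z‖ₑ ^ 2 ∂μ :=
          ENNReal.lintegral_mul_sq_le (hk.comp measurable_prodMk_left).aemeasurable hu.enorm
      _ ≤ A * ∫⁻ z, k x z * ‖u z‖ₑ ^ 2 ∂μ := by gcongr; exact hrow x
  have hswap : ∫⁻ x, ∫⁻ z, k x z * ‖u z‖ₑ ^ 2 ∂μ ∂μ ≤ A * ∫⁻ z, ‖u z‖ₑ ^ 2 ∂μ :=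
    calc ∫⁻ x, ∫⁻ z, k x z * ‖u z‖ₑ ^ 2 ∂μ ∂μ
        = ∫⁻ z, (∫⁻ x, k x z ∂μ) * ‖u z‖ₑ ^ 2 ∂μ := by
          rw [lintegral_lintegral_swap hku]
          congr 1 with z
          exact lintegral_mul_const _ (hk.comp measurable_prodMk_right)
      _ ≤ ∫⁻ z, A * ‖u z‖ₑ ^ 2 ∂μ := lintegral_mono fun z => by gcongr; exact hcol z
      _ = A * ∫⁻ z, ‖u z‖ₑ ^ 2 ∂μ := lintegral_const_mul'' A (hu.enorm.pow_const 2)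
  rw [← ENNReal.pow_le_pow_left_iff two_ne_zero, mul_pow, sq_eLpNorm_two, sq_eLpNorm_two]
  calc ∫⁻ x, ‖∫ z, K x z * u z ∂μ‖ₑ ^ 2 ∂μ
      ≤ ∫⁻ x, A * ∫⁻ z, k x z * ‖u z‖ₑ ^ 2 ∂μ ∂μ := lintegral_mono hpoint
    _ = A * ∫⁻ x, ∫⁻ z, k x z * ‖u z‖ₑ ^ 2 ∂μ ∂μ :=
        lintegral_const_mul'' A hku.lintegral_prod_right
    _ ≤ A ^ 2 * ∫⁻ z, ‖u z‖ₑ ^ 2 ∂μ := by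
        rw [sq, mul_assoc]; gcongr

theorem Real.mul_exp_neg_sq_div_eight_le (u : ℝ) : u * Real.exp (-u ^ 2 / 8) ≤ 2 := by
  have h := Real.add_one_le_exp (u ^ 2 / 8)
  have hinv : Real.exp (-u ^ 2 / 8) * Real.exp (u ^ 2 / 8) = 1 := by
    rw [← Real.exp_add]; ring_nf; exact Real.exp_zero
  nlinarith [Real.exp_pos (-u ^ 2 / 8), sq_nonneg (u - 2)]

theorem Real.abs_exp_sub_one_le_mul_exp (t : ℝ) : |Real.exp t - 1| ≤ |t| * Real.exp |t| := by
  have h := Complex.norm_exp_sub_sum_le_norm_mul_exp t 1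
  simp only [Finset.range_one, Finset.sum_singleton, pow_zero, Nat.factorial_zero, Nat.cast_one,
    div_one, pow_one, Complex.norm_real, Real.norm_eq_abs] at h
  rwa [← Complex.ofReal_exp, ← Complex.ofReal_one, ← Complex.ofReal_sub, Complex.norm_real,
    Real.norm_eq_abs] at h

theorem norm_bargmannKernel {N : ℝ} (hN : 0 ≤ N) (x z : ℂ) :
    ‖bargmannKernel N x z‖ = N * Real.exp (-(N * ‖x - z‖ ^ 2) / 2) := by
  have hre : (x * conj z - (‖x‖ : ℂ) ^ 2 / 2 - (‖z‖ : ℂ) ^ 2 / 2).re = -‖x - z‖ ^ 2 / 2 := by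
    have := Complex.normSq_sub x z
    simp only [← Complex.sq_norm] at this
    simp only [← Complex.ofReal_pow, Complex.sub_re, Complex.mul_re, Complex.conj_re,
      Complex.conj_im, mul_neg, sub_neg_eq_add, Complex.div_ofNat_re, Complex.ofReal_re, this,
      neg_sub]
    ring
  rw [bargmannKernel, norm_mul, Complex.norm_exp, Complex.re_ofReal_mul, hre, Complex.norm_real,
    Real.norm_of_nonneg hN]
  ring_nf

instance : SFinite gammaMeasure := by unfold gammaMeasure; infer_instance

theorem lintegral_exp_neg_mul_sq_norm_sub_gammaMeasure {b : ℝ} (hb : 0 < b) (x : ℂ) :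
    ∫⁻ z, ENNReal.ofReal (Real.exp (-b * ‖x - z‖ ^ 2)) ∂gammaMeasure = ENNReal.ofReal b⁻¹ := by
  have hint : ∫ z : ℂ, Real.exp (-b * ‖z‖ ^ 2) = Real.pi / b := by
    have h := Complex.integral_exp_neg_mul_rpow one_le_two hb
    norm_num [Real.rpow_two, Real.rpow_neg_one, Real.Gamma_two] at h
    simpa [neg_mul, div_eq_mul_inv] using h
  have hvol :
      ∫⁻ z : ℂ, ENNReal.ofReal (Real.exp (-b * ‖z‖ ^ 2)) = ENNReal.ofReal (Real.pi / b) := by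
    rw [← hint, ofReal_integral_eq_lintegral_ofReal
      (Integrable.of_integral_ne_zero (by rw [hint]; positivity))
      (Filter.Eventually.of_forall fun z => (Real.exp_pos _).le)]
  simp_rw [norm_sub_rev x]
  rw [gammaMeasure, lintegral_smul_measure, lintegral_sub_right_eq_self
    (fun z => ENNReal.ofReal (Real.exp (-b * ‖z‖ ^ 2))), hvol, smul_eq_mul,
    ← ENNReal.ofReal_mul (by positivity)]
  congr 1
  field_simp

section ConjugatedKernel

variable {N α : ℝ} {ρ : ℂ → ℝ}

theorem abs_conjugation_exponent_le (hρ : LipschitzWith 1 ρ) (hα : 0 ≤ α) (x z : ℂ) :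
    |α * (ρ x - ρ z) * Real.sqrt N| ≤ α * (Real.sqrt N * ‖x - z‖) := by
  have hlip : |ρ x - ρ z| ≤ ‖x - z‖ := by
    simpa [Real.dist_eq, dist_eq_norm] using hρ.dist_le_mul x z
  rw [abs_mul, abs_mul, abs_of_nonneg hα, abs_of_nonneg (Real.sqrt_nonneg N)]
  calc α * |ρ x - ρ z| * Real.sqrt N ≤ α * ‖x - z‖ * Real.sqrt N := by gcongr
    _ = α * (Real.sqrt N * ‖x - z‖) := by ring

theorem norm_conjugated_bargmannKernel_le (hN : 0 ≤ N) (hρ : LipschitzWith 1 ρ) (hα : 0 ≤ α)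
    (x z : ℂ) :
    ‖(Real.exp (α * (ρ x - ρ z) * Real.sqrt N) : ℂ) * bargmannKernel N x z‖
      ≤ Real.exp (α ^ 2) * N * Real.exp (-(N * ‖x - z‖ ^ 2) / 4) := by
  set t := α * (ρ x - ρ z) * Real.sqrt N
  set v := Real.sqrt N * ‖x - z‖
  have hv : N * ‖x - z‖ ^ 2 = v ^ 2 := by rw [mul_pow, Real.sq_sqrt hN]
  have ht : t ≤ α * v := (le_abs_self t).trans (abs_conjugation_exponent_le hρ hα x z)
  rw [norm_mul, Complex.norm_real, Real.norm_of_nonneg (Real.exp_nonneg t),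
    norm_bargmannKernel hN, hv]
  calc Real.exp t * (N * Real.exp (-v ^ 2 / 2)) = N * Real.exp (t + -v ^ 2 / 2) := by
        rw [Real.exp_add]; ring
    _ ≤ N * Real.exp (α ^ 2 + -v ^ 2 / 4) := by
        gcongr N * Real.exp ?_; nlinarith [sq_nonneg (α - v / 2)]
    _ = Real.exp (α ^ 2) * N * Real.exp (-v ^ 2 / 4) := by rw [Real.exp_add]; ring

theorem norm_conjugated_bargmannKernel_sub_le (hN : 0 ≤ N) (hρ : LipschitzWith 1 ρ) (hα : 0 ≤ α)
    (x z : ℂ) :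
    ‖((Real.exp (α * (ρ x - ρ z) * Real.sqrt N) - 1 : ℝ) : ℂ) * bargmannKernel N x z‖
      ≤ α * Real.exp (α ^ 2) * (2 * N) * Real.exp (-(N / 8) * ‖x - z‖ ^ 2) := by
  set t := α * (ρ x - ρ z) * Real.sqrt N
  set v := Real.sqrt N * ‖x - z‖
  have hv : N * ‖x - z‖ ^ 2 = v ^ 2 := by rw [mul_pow, Real.sq_sqrt hN]
  have ht : |t| ≤ α * v := abs_conjugation_exponent_le hρ hα x z
  have hexp : |Real.exp t - 1| ≤ α * v * Real.exp (α * v) :=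
    (Real.abs_exp_sub_one_le_mul_exp t).trans (by gcongr)
  rw [norm_mul, Complex.norm_real, Real.norm_eq_abs, norm_bargmannKernel hN,
    show -(N / 8) * ‖x - z‖ ^ 2 = -(N * ‖x - z‖ ^ 2) / 8 by ring, hv]
  calc |Real.exp t - 1| * (N * Real.exp (-v ^ 2 / 2))
      ≤ α * v * Real.exp (α * v) * (N * Real.exp (-v ^ 2 / 2)) := by gcongr
    _ = α * N * v * Real.exp (α * v + -v ^ 2 / 2) := by rw [Real.exp_add]; ring
    _ ≤ α * N * v * Real.exp (α ^ 2 + -v ^ 2 / 4) := by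
        gcongr α * N * v * Real.exp ?_; nlinarith [sq_nonneg (α - v / 2)]
    _ = α * Real.exp (α ^ 2) * N * (v * Real.exp (-v ^ 2 / 8)) * Real.exp (-v ^ 2 / 8) := by
        rw [show -v ^ 2 / 4 = -v ^ 2 / 8 + -v ^ 2 / 8 by ring, Real.exp_add, Real.exp_add]; ring
    _ ≤ α * Real.exp (α ^ 2) * N * 2 * Real.exp (-v ^ 2 / 8) := by
        gcongr; exact Real.mul_exp_neg_sq_div_eight_le v
    _ = α * Real.exp (α ^ 2) * (2 * N) * Real.exp (-v ^ 2 / 8) := by ring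

theorem eLpNorm_conjugated_bargmann_sub_le (hN : 0 < N) (hρ : LipschitzWith 1 ρ) (hα : 0 ≤ α)
    {u : ℂ → ℂ} (hu : AEStronglyMeasurable u gammaMeasure) :
    eLpNorm (fun x : ℂ => ∫ z : ℂ, ((Real.exp (α * (ρ x - ρ z) * Real.sqrt N) - 1 : ℝ) : ℂ)
        * bargmannKernel N x z * u z ∂gammaMeasure) 2 gammaMeasure
      ≤ ENNReal.ofReal (16 * α * Real.exp (α ^ 2)) * eLpNorm u 2 gammaMeasure := by
  set c := α * Real.exp (α ^ 2) * (2 * N)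
  have hrow (x : ℂ) : ∫⁻ z, ENNReal.ofReal c * ENNReal.ofReal (Real.exp (-(N / 8) * ‖x - z‖ ^ 2))
      ∂gammaMeasure = ENNReal.ofReal (16 * α * Real.exp (α ^ 2)) := by
    rw [lintegral_const_mul _ (by fun_prop),
      lintegral_exp_neg_mul_sq_norm_sub_gammaMeasure (by positivity),
      ← ENNReal.ofReal_mul (by positivity)]
    congr 1
    field_simp
    ring
  refine eLpNorm_two_integral_kernel_mul_le
    (k := fun x z => ENNReal.ofReal c * ENNReal.ofReal (Real.exp (-(N / 8) * ‖x - z‖ ^ 2)))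
    (by fun_prop) (fun x z => ?_) (fun x => (hrow x).le) (fun z => ?_) hu
  · rw [← ENNReal.ofReal_mul (by positivity), ← ofReal_norm]
    exact ENNReal.ofReal_le_ofReal (norm_conjugated_bargmannKernel_sub_le hN.le hρ hα x z)
  · simp_rw [norm_sub_rev _ z]
    exact (hrow z).le

end ConjugatedKernel

/-- For a 1-Lipschitz `ρ : ℂ → ℝ`, `α ≥ 0` and `ε = N^{-1/2}`, the conjugated
Bargmann projection `P_N^α = e^{αρ/ε} P_N e^{-αρ/ε}` (with kernel
`e^{α(ρ(x)−ρ(z))/ε} P_N(x,z)`) satisfies the kernel bound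
`|P_N^α(x,z)| ≤ e^{α²} N e^{-N|x−z|²/4}` and the operator-norm bound
`‖P_N^α − P_N‖ ≤ C α e^{α²}` for a universal constant `C` (the latter expressed by the
`L²(γ)` bound over all `u ∈ L²(γ)`). -/
theorem conjugated_bargmann_bounds :
    ∃ C : ℝ, 0 < C ∧ ∀ (N : ℝ), 1 ≤ N → ∀ (ρ : ℂ → ℝ), LipschitzWith 1 ρ →
      ∀ (α : ℝ), 0 ≤ α →
      (∀ x z : ℂ,
          ‖(Real.exp (α * (ρ x - ρ z) * Real.sqrt N) : ℂ) * bargmannKernel N x z‖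
            ≤ Real.exp (α ^ 2) * N * Real.exp (-(N * ‖x - z‖ ^ 2) / 4))
      ∧ ∀ u : ℂ → ℂ, MemLp u 2 gammaMeasure →
          eLpNorm (fun x : ℂ => ∫ z : ℂ,
              ((Real.exp (α * (ρ x - ρ z) * Real.sqrt N) - 1 : ℝ) : ℂ)
                * bargmannKernel N x z * u z ∂gammaMeasure) 2 gammaMeasure
            ≤ ENNReal.ofReal (C * α * Real.exp (α ^ 2)) * eLpNorm u 2 gammaMeasure := by
  refine ⟨16, by norm_num, fun N hN ρ hρ α hα => ⟨?_, fun u hu => ?_⟩⟩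
  · exact norm_conjugated_bargmannKernel_le (by linarith) hρ hα
  · exact eLpNorm_conjugated_bargmann_sub_le (by linarith) hρ hα hu.1
end
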